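/- arXiv:1109.6467 — 5 statements merged into one kernel-verified Lean document; each statement's English description precedes it below -/
import Mathlib

section
/- Let U be a finite-dimensional real vector space and let C be a complex vector subspace of U^ℂ with C ∩ σ(C) = 0 (a linear CR structure on U). Then there exist a finite-dimensional real vector space E with a linear complex structure J and an injective ℝ-linear map ι : U → E such that ι(U) + J(ι(U)) = E and C = (ι^ℂ)⁻¹(E^J), where ι^ℂ : U^ℂ → E^ℂ is the complexification of ι. Moreover, such (E, J, ι) is unique up to complex-linear isomorphism: if (E', J', ι') is another such triple, there exists an ℝ-linear isomorphism t : E → E' with t ∘ J = J' ∘ t and t ∘ ι = ι'. -/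
open TensorProduct

/-- The conjugation `σ` on the complexification `U^ℂ = ℂ ⊗[ℝ] U`, given by
`σ(z ⊗ u) = z̄ ⊗ u`. -/
noncomputable def conjTensor (U : Type*) [AddCommGroup U] [Module ℝ U] :
    ℂ ⊗[ℝ] U →ₗ[ℝ] ℂ ⊗[ℝ] U :=
  TensorProduct.map Complex.conjAe.toLinearMap LinearMap.id

/-- The `(-i)`-eigenspace `E^J ⊆ E^ℂ` of the complex-linear extension of `J`. -/
noncomputable def minusIEigenspace {E : Type*} [AddCommGroup E] [Module ℝ E]
    (J : E →ₗ[ℝ] E) : Submodule ℂ (ℂ ⊗[ℝ] E) :=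
  Module.End.eigenspace (LinearMap.baseChange ℂ J) (-Complex.I)

/-- The conditions required of a triple `(E, J, ι)` realizing the CR structure `C` on `U`:
`J` is a linear complex structure on `E`, `ι : U → E` is injective,
`ι(U) + J(ι(U)) = E`, and `C = (ι^ℂ)⁻¹(E^J)`. -/
def IsCRRealization {U : Type*} [AddCommGroup U] [Module ℝ U]
    (C : Submodule ℂ (ℂ ⊗[ℝ] U))
    (E : Type*) [AddCommGroup E] [Module ℝ E]
    (J : E →ₗ[ℝ] E) (ι : U →ₗ[ℝ] E) : Prop :=
  J ∘ₗ J = -LinearMap.id ∧ Function.Injective ι ∧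
    LinearMap.range ι ⊔ (LinearMap.range ι).map J = ⊤ ∧
    C = Submodule.comap (LinearMap.baseChange ℂ ι) (minusIEigenspace J)

section aux

variable {E : Type*} [AddCommGroup E] [Module ℝ E]

/-- `ψ_J : ℂ ⊗ E → E`, `z ⊗ e ↦ re z • e + im z • J e`. -/
noncomputable def psiJ (J : E →ₗ[ℝ] E) : ℂ ⊗[ℝ] E →ₗ[ℝ] E :=
  TensorProduct.lift (Complex.reLm.smulRight (LinearMap.id : E →ₗ[ℝ] E) +
    Complex.imLm.smulRight J)

@[simp] lemma psiJ_tmul (J : E →ₗ[ℝ] E) (z : ℂ) (e : E) :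
    psiJ J (z ⊗ₜ[ℝ] e) = z.re • e + z.im • J e := by
  simp [psiJ]

lemma psiJ_baseChange (J : E →ₗ[ℝ] E) (w : ℂ ⊗[ℝ] E) :
    psiJ J (J.baseChange ℂ w) = J (psiJ J w) := by
  induction w using TensorProduct.induction_on with
  | zero => simp
  | tmul z e => simp
  | add a b ha hb => simp [ha, hb]

lemma psiJ_smul_I {J : E →ₗ[ℝ] E} (hJ : J ∘ₗ J = -LinearMap.id) (w : ℂ ⊗[ℝ] E) :
    psiJ J (Complex.I • w) = J (psiJ J w) := by
  induction w using TensorProduct.induction_on with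
  | zero => simp
  | tmul z e =>
    have hJe : J (J e) = -e := by simpa using LinearMap.ext_iff.mp hJ e
    rw [smul_tmul']
    simp [Complex.mul_re, Complex.mul_im, hJe, smul_neg]
    abel
  | add a b ha hb => simp [smul_add, ha, hb]

lemma psiJ_decomp {J : E →ₗ[ℝ] E} (hJ : J ∘ₗ J = -LinearMap.id) (w : ℂ ⊗[ℝ] E) :
    w - Complex.I • (J.baseChange ℂ w) =
      (1 : ℂ) ⊗ₜ[ℝ] (psiJ J w) - Complex.I ⊗ₜ[ℝ] (J (psiJ J w)) := by
  induction w using TensorProduct.induction_on with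
  | zero => simp
  | tmul z e =>
    have hJe : J (J e) = -e := by simpa using LinearMap.ext_iff.mp hJ e
    have hz : z = z.re • (1 : ℂ) + z.im • Complex.I := by simp [Complex.real_smul]
    have hIz : Complex.I • z = z.re • Complex.I - z.im • (1 : ℂ) := by
      rw [smul_eq_mul]
      simp only [Complex.real_smul, smul_eq_mul, mul_one]
      rw [← Complex.re_add_im z]
      ring_nf
      simp [Complex.I_sq]
      ring
    rw [LinearMap.baseChange_tmul, smul_tmul', hIz, psiJ_tmul, map_add, map_smul, map_smul, hJe]
    simp only [sub_tmul, add_tmul, tmul_add, tmul_smul, tmul_neg, smul_neg, ← smul_tmul']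
    nth_rewrite 1 [hz]
    simp only [add_tmul, ← smul_tmul']
    abel
  | add a b ha hb =>
    calc a + b - Complex.I • J.baseChange ℂ (a + b)
        = (a - Complex.I • J.baseChange ℂ a) + (b - Complex.I • J.baseChange ℂ b) := by
          rw [map_add, smul_add]; abel
      _ = ((1:ℂ) ⊗ₜ[ℝ] psiJ J a - Complex.I ⊗ₜ[ℝ] J (psiJ J a)) +
          ((1:ℂ) ⊗ₜ[ℝ] psiJ J b - Complex.I ⊗ₜ[ℝ] J (psiJ J b)) := by rw [ha, hb]
      _ = (1:ℂ) ⊗ₜ[ℝ] psiJ J (a+b) - Complex.I ⊗ₜ[ℝ] J (psiJ J (a+b)) := by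
          rw [map_add, tmul_add, map_add, tmul_add]; abel

lemma mem_minusIEigenspace_iff {J : E →ₗ[ℝ] E} (hJ : J ∘ₗ J = -LinearMap.id)
    (w : ℂ ⊗[ℝ] E) : w ∈ minusIEigenspace J ↔ psiJ J w = 0 := by
  rw [minusIEigenspace, Module.End.mem_eigenspace_iff]
  constructor
  · intro h
    have e1 : psiJ J ((-Complex.I) • w) = - J (psiJ J w) := by
      rw [neg_smul, map_neg, psiJ_smul_I hJ]
    have e2 : J (psiJ J w) = - J (psiJ J w) := by
      conv_lhs => rw [← psiJ_baseChange, h]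
      exact e1
    have h1 : J (psiJ J w) + J (psiJ J w) = 0 := eq_neg_iff_add_eq_zero.mp e2
    have h2 : J (psiJ J w) = 0 := by
      have h3 : (2 : ℝ) • J (psiJ J w) = 0 := by rw [two_smul]; exact h1
      exact (smul_eq_zero.mp h3).resolve_left two_ne_zero
    have : psiJ J w = - J (J (psiJ J w)) := by
      have := LinearMap.ext_iff.mp hJ (psiJ J w)
      simp at this
      rw [this]; simp
    rw [this, h2]; simp
  · intro h
    have hd := psiJ_decomp hJ w
    rw [h] at hd
    simp only [tmul_zero, map_zero, sub_zero] at hd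
    have hw : w = Complex.I • (J.baseChange ℂ w) := sub_eq_zero.mp hd
    have hJJ : (J.baseChange ℂ) ((J.baseChange ℂ) w) = -w := by
      rw [← LinearMap.comp_apply, ← LinearMap.baseChange_comp, hJ]
      simp
    calc (J.baseChange ℂ) w = (J.baseChange ℂ) (Complex.I • (J.baseChange ℂ w)) := by
          rw [← hw]
      _ = Complex.I • ((J.baseChange ℂ) ((J.baseChange ℂ) w)) := by rw [map_smul]
      _ = Complex.I • (-w) := by rw [hJJ]
      _ = (-Complex.I) • w := by rw [smul_neg, neg_smul]

lemma mem_comap_iff {U : Type*} [AddCommGroup U] [Module ℝ U]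
    {J : E →ₗ[ℝ] E} (hJ : J ∘ₗ J = -LinearMap.id) (ι : U →ₗ[ℝ] E) (x : ℂ ⊗[ℝ] U) :
    x ∈ Submodule.comap (LinearMap.baseChange ℂ ι) (minusIEigenspace J) ↔
      psiJ J ((LinearMap.baseChange ℂ ι) x) = 0 := by
  rw [Submodule.mem_comap, mem_minusIEigenspace_iff hJ]

/-- transport of realizations along a real-linear equivalence -/
lemma IsCRRealization.congr {U F : Type*} [AddCommGroup U] [Module ℝ U]
    [AddCommGroup F] [Module ℝ F]
    {C : Submodule ℂ (ℂ ⊗[ℝ] U)} {J : E →ₗ[ℝ] E} {ι : U →ₗ[ℝ] E}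
    (h : IsCRRealization C E J ι) (e : E ≃ₗ[ℝ] F) :
    IsCRRealization C F (e.toLinearMap ∘ₗ J ∘ₗ e.symm.toLinearMap)
      (e.toLinearMap ∘ₗ ι) := by
  obtain ⟨hJ, hinj, hsup, hcomap⟩ := h
  have hJpt : ∀ x, J (J x) = -x := fun x => by simpa using LinearMap.ext_iff.mp hJ x
  refine ⟨?_, e.injective.comp hinj, ?_, ?_⟩
  · ext x
    simp [hJpt (e.symm x)]
  · rw [eq_top_iff]
    rintro x -
    have hx : e.symm x ∈ LinearMap.range ι ⊔ (LinearMap.range ι).map J := by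
      rw [hsup]; trivial
    obtain ⟨a, ha, b, hb, hab⟩ := Submodule.mem_sup.mp hx
    obtain ⟨u, rfl⟩ := ha
    obtain ⟨c, ⟨v, rfl⟩, rfl⟩ := hb
    have : x = (e.toLinearMap ∘ₗ ι) u +
        (e.toLinearMap ∘ₗ J ∘ₗ e.symm.toLinearMap) ((e.toLinearMap ∘ₗ ι) v) := by
      simp only [LinearMap.comp_apply, LinearEquiv.coe_coe, LinearEquiv.symm_apply_apply]
      rw [← map_add, hab]
      simp
    rw [this]
    exact add_mem (Submodule.mem_sup_left (LinearMap.mem_range_self _ u))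
      (Submodule.mem_sup_right (Submodule.mem_map_of_mem (LinearMap.mem_range_self _ _)))
  · rw [hcomap]
    ext x
    simp only [Submodule.mem_comap]
    have hbc : (LinearMap.baseChange ℂ (e.toLinearMap ∘ₗ ι)) x =
        (LinearMap.baseChange ℂ e.toLinearMap) ((LinearMap.baseChange ℂ ι) x) := by
      rw [LinearMap.baseChange_comp, LinearMap.comp_apply]
    have hid : LinearMap.baseChange ℂ e.symm.toLinearMap ∘ₗ
        LinearMap.baseChange ℂ e.toLinearMap = LinearMap.id := by
      rw [← LinearMap.baseChange_comp,
        show (e.symm.toLinearMap ∘ₗ e.toLinearMap : E →ₗ[ℝ] E) = LinearMap.id from ?_,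
        LinearMap.baseChange_id]
      · ext x; simp
    have hinj2 : Function.Injective (LinearMap.baseChange ℂ e.toLinearMap) := by
      apply Function.LeftInverse.injective
        (g := LinearMap.baseChange ℂ e.symm.toLinearMap)
      intro y
      rw [← LinearMap.comp_apply, hid, LinearMap.id_apply]
    rw [minusIEigenspace, minusIEigenspace, Module.End.mem_eigenspace_iff,
      Module.End.mem_eigenspace_iff]
    have hbJ' : (LinearMap.baseChange ℂ (e.toLinearMap ∘ₗ J ∘ₗ e.symm.toLinearMap))
        ((LinearMap.baseChange ℂ (e.toLinearMap ∘ₗ ι)) x) =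
        (LinearMap.baseChange ℂ e.toLinearMap)
          ((LinearMap.baseChange ℂ J) ((LinearMap.baseChange ℂ ι) x)) := by
      rw [hbc, LinearMap.baseChange_comp, LinearMap.baseChange_comp]
      simp only [LinearMap.comp_apply]
      rw [show (LinearMap.baseChange ℂ e.symm.toLinearMap)
          ((LinearMap.baseChange ℂ e.toLinearMap) ((LinearMap.baseChange ℂ ι) x)) =
          (LinearMap.baseChange ℂ ι) x from by
        rw [← LinearMap.comp_apply, hid, LinearMap.id_apply]]
    rw [hbJ', hbc, ← map_smul (LinearMap.baseChange ℂ e.toLinearMap)]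
    exact hinj2.eq_iff.symm

end aux

section exist

variable (U : Type*) [AddCommGroup U] [Module ℝ U] (C : Submodule ℂ (ℂ ⊗[ℝ] U))

noncomputable def Jquot : ((ℂ ⊗[ℝ] U) ⧸ C) →ₗ[ℝ] ((ℂ ⊗[ℝ] U) ⧸ C) :=
  (Complex.I • (LinearMap.id : ((ℂ ⊗[ℝ] U) ⧸ C) →ₗ[ℂ] ((ℂ ⊗[ℝ] U) ⧸ C))).restrictScalars ℝ

noncomputable def iotaQuot : U →ₗ[ℝ] ((ℂ ⊗[ℝ] U) ⧸ C) :=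
  (C.mkQ.restrictScalars ℝ) ∘ₗ ((TensorProduct.mk ℝ ℂ U) 1)

@[simp] lemma Jquot_apply (x : (ℂ ⊗[ℝ] U) ⧸ C) : Jquot U C x = Complex.I • x := rfl

@[simp] lemma iotaQuot_apply (u : U) :
    iotaQuot U C u = Submodule.Quotient.mk ((1:ℂ) ⊗ₜ[ℝ] u) := rfl

lemma tensor_split (z : ℂ) (u : U) :
    z.re • ((1:ℂ) ⊗ₜ[ℝ] u) + z.im • (Complex.I • ((1:ℂ) ⊗ₜ[ℝ] u)) = z ⊗ₜ[ℝ] u := by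
  have h1 : Complex.I • ((1:ℂ) ⊗ₜ[ℝ] u) = Complex.I ⊗ₜ[ℝ] u := by
    rw [smul_tmul', smul_eq_mul, mul_one]
  rw [h1, smul_tmul', smul_tmul', ← add_tmul]
  congr 1
  simp [Complex.real_smul]

lemma psi_comp_quot (x : ℂ ⊗[ℝ] U) :
    psiJ (Jquot U C) ((LinearMap.baseChange ℂ (iotaQuot U C)) x) =
      Submodule.Quotient.mk x := by
  induction x using TensorProduct.induction_on with
  | zero => simp
  | tmul z u =>
    rw [LinearMap.baseChange_tmul, iotaQuot_apply, psiJ_tmul, Jquot_apply]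
    rw [← Submodule.Quotient.mk_smul, ← Submodule.Quotient.mk_smul C,
      ← Submodule.Quotient.mk_smul C, ← Submodule.Quotient.mk_add]
    rw [tensor_split]
  | add a b ha hb => simp [map_add, ha, hb, Submodule.Quotient.mk_add]

lemma quot_isCR
    (hC : C.restrictScalars ℝ ⊓ (C.restrictScalars ℝ).map (conjTensor U) = ⊥) :
    IsCRRealization C ((ℂ ⊗[ℝ] U) ⧸ C) (Jquot U C) (iotaQuot U C) := by
  have hJ : Jquot U C ∘ₗ Jquot U C = -LinearMap.id := by
    apply LinearMap.ext
    intro x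
    show Complex.I • (Complex.I • x) = -x
    rw [smul_smul, Complex.I_mul_I, neg_one_smul]
  refine ⟨hJ, ?_, ?_, ?_⟩
  · -- injectivity
    rw [injective_iff_map_eq_zero]
    intro u hu
    have h1 : (1:ℂ) ⊗ₜ[ℝ] u ∈ C := by
      rw [iotaQuot_apply] at hu
      exact (Submodule.Quotient.mk_eq_zero C).mp hu
    have h2 : (1:ℂ) ⊗ₜ[ℝ] u ∈ (C.restrictScalars ℝ).map (conjTensor U) := by
      refine ⟨(1:ℂ) ⊗ₜ[ℝ] u, h1, ?_⟩
      simp [conjTensor]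
    have h3 : (1:ℂ) ⊗ₜ[ℝ] u = 0 := by
      have : (1:ℂ) ⊗ₜ[ℝ] u ∈ C.restrictScalars ℝ ⊓ (C.restrictScalars ℝ).map (conjTensor U) :=
        ⟨h1, h2⟩
      rw [hC] at this
      simpa using this
    have : psiJ (0 : U →ₗ[ℝ] U) ((1:ℂ) ⊗ₜ[ℝ] u) = u := by simp
    rw [h3] at this
    simpa using this.symm
  · -- range condition
    rw [eq_top_iff]
    rintro x -
    obtain ⟨y, rfl⟩ := Submodule.Quotient.mk_surjective C x
    induction y using TensorProduct.induction_on with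
    | zero =>
      rw [Submodule.Quotient.mk_zero]
      exact zero_mem _
    | tmul z u =>
      have hm : (Submodule.Quotient.mk (p := C) (z ⊗ₜ[ℝ] u)) =
          z.re • iotaQuot U C u + z.im • (Jquot U C (iotaQuot U C u)) := by
        rw [← psi_comp_quot, LinearMap.baseChange_tmul, iotaQuot_apply, psiJ_tmul, Jquot_apply]
      rw [hm]
      exact add_mem
        (Submodule.smul_mem _ _ (Submodule.mem_sup_left (LinearMap.mem_range_self _ _)))
        (Submodule.smul_mem _ _ (Submodule.mem_sup_right
          (Submodule.mem_map_of_mem (LinearMap.mem_range_self _ _))))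
    | add a b ha hb =>
      rw [Submodule.Quotient.mk_add]
      exact add_mem ha hb
  · -- comap condition
    ext x
    rw [mem_comap_iff hJ, psi_comp_quot, Submodule.Quotient.mk_eq_zero]

end exist

section uniq

variable {U : Type*} [AddCommGroup U] [Module ℝ U] {C : Submodule ℂ (ℂ ⊗[ℝ] U)}

lemma real_phi {E : Type*} [AddCommGroup E] [Module ℝ E]
    {J : E →ₗ[ℝ] E} {ι : U →ₗ[ℝ] E} (h : IsCRRealization C E J ι) :
    ∃ Φ : ℂ ⊗[ℝ] U →ₗ[ℝ] E,
      Function.Surjective Φ ∧ LinearMap.ker Φ = C.restrictScalars ℝ ∧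
      (∀ u, Φ ((1:ℂ) ⊗ₜ[ℝ] u) = ι u) ∧ (∀ x, Φ (Complex.I • x) = J (Φ x)) := by
  obtain ⟨hJ, hinj, hsup, hcomap⟩ := h
  refine ⟨psiJ J ∘ₗ ((LinearMap.baseChange ℂ ι).restrictScalars ℝ), ?_, ?_, ?_, ?_⟩
  · rw [← LinearMap.range_eq_top, eq_top_iff, ← hsup]
    apply sup_le
    · rintro _ ⟨u, rfl⟩
      exact ⟨(1:ℂ) ⊗ₜ[ℝ] u, by simp⟩
    · rintro _ ⟨_, ⟨u, rfl⟩, rfl⟩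
      refine ⟨Complex.I ⊗ₜ[ℝ] u, ?_⟩
      simp
  · ext x
    rw [LinearMap.mem_ker, LinearMap.comp_apply, LinearMap.coe_restrictScalars,
      ← mem_comap_iff hJ, ← hcomap, Submodule.restrictScalars_mem]
  · intro u
    simp
  · intro x
    rw [LinearMap.comp_apply, LinearMap.coe_restrictScalars, map_smul,
      LinearMap.comp_apply, LinearMap.coe_restrictScalars, psiJ_smul_I hJ]

lemma uniq_isCR {E : Type*} [AddCommGroup E] [Module ℝ E]
    {E' : Type*} [AddCommGroup E'] [Module ℝ E']
    {J : E →ₗ[ℝ] E} {ι : U →ₗ[ℝ] E} {J' : E' →ₗ[ℝ] E'} {ι' : U →ₗ[ℝ] E'}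
    (h : IsCRRealization C E J ι) (h' : IsCRRealization C E' J' ι') :
    ∃ t : E ≃ₗ[ℝ] E',
      t.toLinearMap ∘ₗ J = J' ∘ₗ t.toLinearMap ∧ t.toLinearMap ∘ₗ ι = ι' := by
  obtain ⟨Φ, hs, hk, h1, hI⟩ := real_phi h
  obtain ⟨Φ', hs', hk', h1', hI'⟩ := real_phi h'
  let e1 := Φ.quotKerEquivOfSurjective hs
  let e2 := Φ'.quotKerEquivOfSurjective hs'
  let q := Submodule.quotEquivOfEq _ _ (hk.trans hk'.symm)
  let t := e1.symm.trans (q.trans e2)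
  have ht : ∀ x, t (Φ x) = Φ' x := by
    intro x
    have hx : e1 (Submodule.Quotient.mk x) = Φ x := by
      simp [e1, LinearMap.quotKerEquivOfSurjective]
    have hsymm : e1.symm (Φ x) = Submodule.Quotient.mk x := by
      rw [← hx, LinearEquiv.symm_apply_apply]
    have hq : q (Submodule.Quotient.mk x) = Submodule.Quotient.mk x :=
      Submodule.quotEquivOfEq_mk _ _ _ x
    have he2 : e2 (Submodule.Quotient.mk x) = Φ' x := by
      simp [e2, LinearMap.quotKerEquivOfSurjective]
    simp only [t, LinearEquiv.trans_apply, hsymm, hq, he2]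
  refine ⟨t, ?_, ?_⟩
  · apply LinearMap.ext
    intro v
    obtain ⟨x, rfl⟩ := hs v
    simp only [LinearMap.comp_apply, LinearEquiv.coe_coe]
    rw [← hI, ht, hI', ht]
  · apply LinearMap.ext
    intro u
    simp only [LinearMap.comp_apply, LinearEquiv.coe_coe]
    rw [← h1, ht, h1']

end uniq


/-- Any linear CR structure `C` on a finite-dimensional real vector space `U` is realized
by a pair `(U, E)` where `E` is a complex vector space containing `U` with
`U + JU = E`; moreover this realization is unique up to complex-linear isomorphism. -/
theorem stmt3 (U : Type) [AddCommGroup U] [Module ℝ U] [FiniteDimensional ℝ U]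
    (C : Submodule ℂ (ℂ ⊗[ℝ] U))
    (hC : C.restrictScalars ℝ ⊓ (C.restrictScalars ℝ).map (conjTensor U) = ⊥) :
    (∃ (n : ℕ) (J : (Fin n → ℝ) →ₗ[ℝ] (Fin n → ℝ)) (ι : U →ₗ[ℝ] (Fin n → ℝ)),
      IsCRRealization C (Fin n → ℝ) J ι) ∧
    (∀ (E : Type) [AddCommGroup E] [Module ℝ E] [FiniteDimensional ℝ E]
       (E' : Type) [AddCommGroup E'] [Module ℝ E'] [FiniteDimensional ℝ E']
       (J : E →ₗ[ℝ] E) (ι : U →ₗ[ℝ] E) (J' : E' →ₗ[ℝ] E') (ι' : U →ₗ[ℝ] E'),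
       IsCRRealization C E J ι → IsCRRealization C E' J' ι' →
       ∃ t : E ≃ₗ[ℝ] E',
         t.toLinearMap ∘ₗ J = J' ∘ₗ t.toLinearMap ∧ t.toLinearMap ∘ₗ ι = ι') := by
  constructor
  · let e : ((ℂ ⊗[ℝ] U) ⧸ C) ≃ₗ[ℝ] (Fin (Module.finrank ℝ ((ℂ ⊗[ℝ] U) ⧸ C)) → ℝ) :=
      (Module.finBasis ℝ ((ℂ ⊗[ℝ] U) ⧸ C)).equivFun
    exact ⟨Module.finrank ℝ ((ℂ ⊗[ℝ] U) ⧸ C), _, _, (quot_isCR U C hC).congr e⟩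
  · intro E _ _ _ E' _ _ _ J ι J' ι' h h'
    exact uniq_isCR h h'
end

section
/- Let U be a finite-dimensional real vector space and let C be a complex vector subspace of U^ℂ with C + σ(C) = U^ℂ (a linear co-CR structure on U). Then there exist a finite-dimensional real vector space E with a linear complex structure J, a real subspace V ⊆ E with V ∩ J(V) = 0, and a surjective ℝ-linear map π : E → U with kernel V such that π^ℂ(E^J) = C, where π^ℂ : E^ℂ → U^ℂ is the complexification of π. -/
open TensorProduct

set_option linter.unusedSectionVars false

section
variable {U : Type*} [AddCommGroup U] [Module ℝ U]

lemma conjTensor_tmul (z : ℂ) (u : U) :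
    conjTensor U (z ⊗ₜ[ℝ] u) = (starRingEnd ℂ z) ⊗ₜ[ℝ] u := by
  simp [conjTensor]

lemma conjTensor_conjTensor (x : ℂ ⊗[ℝ] U) :
    conjTensor U (conjTensor U x) = x := by
  induction x with
  | zero => simp
  | tmul z u => simp [conjTensor_tmul]
  | add a b ha hb => simp [ha, hb]

lemma conjTensor_smul (z : ℂ) (x : ℂ ⊗[ℝ] U) :
    conjTensor U (z • x) = (starRingEnd ℂ z) • conjTensor U x := by
  induction x with
  | zero => simp
  | tmul w u => simp [smul_tmul', conjTensor_tmul]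
  | add a b ha hb => simp [smul_add, ha, hb]

noncomputable def ReU : ℂ ⊗[ℝ] U →ₗ[ℝ] U :=
  (TensorProduct.lid ℝ U).toLinearMap ∘ₗ TensorProduct.map Complex.reLm LinearMap.id

lemma ReU_tmul (z : ℂ) (u : U) : ReU (z ⊗ₜ[ℝ] u) = z.re • u := by
  simp [ReU]

lemma one_tmul_ReU (x : ℂ ⊗[ℝ] U) :
    (1 : ℂ) ⊗ₜ[ℝ] (ReU x) = (2⁻¹ : ℝ) • (x + conjTensor U x) := by
  induction x with
  | zero => simp
  | tmul z u =>
      rw [ReU_tmul, conjTensor_tmul, tmul_smul, ← add_tmul, smul_tmul']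
      congr 1
      rw [Complex.add_conj]
      simp [Complex.real_smul]
  | add a b ha hb =>
      rw [map_add, tmul_add, ha, hb, map_add]
      rw [← smul_add]
      ring_nf
      rw [add_add_add_comm]

noncomputable def ImU : ℂ ⊗[ℝ] U →ₗ[ℝ] U :=
  (TensorProduct.lid ℝ U).toLinearMap ∘ₗ TensorProduct.map Complex.imLm LinearMap.id

lemma ImU_tmul (z : ℂ) (u : U) : ImU (z ⊗ₜ[ℝ] u) = z.im • u := by
  simp [ImU]

lemma ReU_conjTensor (x : ℂ ⊗[ℝ] U) : ReU (conjTensor U x) = ReU x := by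
  induction x with
  | zero => simp
  | tmul z u => simp [conjTensor_tmul, ReU_tmul]
  | add a b ha hb => simp [ha, hb]

lemma ReU_one_tmul (u : U) : ReU ((1 : ℂ) ⊗ₜ[ℝ] u) = u := by
  simp [ReU_tmul]

lemma conjTensor_eq_neg_of_ReU_eq_zero {x : ℂ ⊗[ℝ] U} (h : ReU x = 0) :
    conjTensor U x = -x := by
  have h2 := one_tmul_ReU x
  rw [h, tmul_zero] at h2
  have : x + conjTensor U x = 0 := by
    have := congrArg (fun y => (2 : ℝ) • y) h2
    simpa using this.symm
  linear_combination (norm := abel) this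
end


section EJ
variable {E : Type*} [AddCommGroup E] [Module ℝ E] (J : E →ₗ[ℝ] E)

/-- `e ↦ 1 ⊗ e + i ⊗ (J e)`. -/
noncomputable def vv (e : E) : ℂ ⊗[ℝ] E :=
  (1 : ℂ) ⊗ₜ[ℝ] e + Complex.I ⊗ₜ[ℝ] (J e)

lemma vv_add (e f : E) : vv J (e + f) = vv J e + vv J f := by
  simp [vv, tmul_add, map_add]
  abel

lemma vv_smul (r : ℝ) (e : E) : vv J (r • e) = r • vv J e := by
  simp [vv, tmul_smul, map_smul, smul_add]

lemma baseChange_vv (hJ : ∀ e, J (J e) = -e) (e : E) :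
    LinearMap.baseChange ℂ J (vv J e) = (-Complex.I) • vv J e := by
  simp only [vv, map_add, LinearMap.baseChange_tmul, hJ, smul_add, smul_tmul',
    smul_eq_mul, mul_one, tmul_neg, neg_mul, Complex.I_mul_I, neg_neg, neg_tmul]
  abel

lemma vv_mem_eig (hJ : ∀ e, J (J e) = -e) (e : E) : vv J e ∈ minusIEigenspace J := by
  rw [minusIEigenspace, Module.End.mem_eigenspace_iff]
  exact baseChange_vv J hJ e

noncomputable def ww (e : E) : ℂ ⊗[ℝ] E :=
  (1 : ℂ) ⊗ₜ[ℝ] e - Complex.I ⊗ₜ[ℝ] (J e)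

lemma ww_add (e f : E) : ww J (e + f) = ww J e + ww J f := by
  simp [ww, tmul_add, map_add]
  abel

lemma baseChange_ww (hJ : ∀ e, J (J e) = -e) (e : E) :
    LinearMap.baseChange ℂ J (ww J e) = Complex.I • ww J e := by
  simp only [ww, map_sub, LinearMap.baseChange_tmul, hJ, smul_sub, smul_tmul',
    smul_eq_mul, mul_one, tmul_neg, Complex.I_mul_I, neg_tmul, neg_neg, sub_neg_eq_add]
  abel

lemma decomp (hJ : ∀ e, J (J e) = -e) (y : ℂ ⊗[ℝ] E) :
    (2 : ℝ) • y = vv J (ReU y - J (ImU y)) + ww J (ReU y + J (ImU y)) := by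
  induction y with
  | zero => simp [vv, ww]
  | tmul z e =>
    have hz : (z ⊗ₜ[ℝ] e : ℂ ⊗[ℝ] E)
        = z.re • ((1 : ℂ) ⊗ₜ[ℝ] e) + z.im • (Complex.I ⊗ₜ[ℝ] e) := by
      rw [smul_tmul', smul_tmul', ← add_tmul]
      congr 1
      simp [Complex.real_smul]
    simp only [ReU_tmul, ImU_tmul, map_smul, vv, ww, map_add, map_sub, hJ,
      tmul_sub, tmul_add, tmul_smul, smul_sub, smul_add, smul_neg, tmul_neg]
    rw [hz]
    module
  | add a b ha hb =>
    rw [smul_add, ha, hb]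
    simp only [map_add]
    have h1 : ∀ (p q r s : E), vv J ((p + q) - (r + s)) = vv J (p - r) + vv J (q - s) := by
      intro p q r s
      rw [← vv_add]
      congr 1
      abel
    have h2 : ∀ (p q r s : E), ww J ((p + q) + (r + s)) = ww J (p + r) + ww J (q + s) := by
      intro p q r s
      rw [← ww_add]
      congr 1
      abel
    rw [h1, h2]
    abel

lemma eig_sub_range (hJ : ∀ e, J (J e) = -e) {y : ℂ ⊗[ℝ] E}
    (hy : y ∈ minusIEigenspace J) : ∃ e, vv J e = y := by
  rw [minusIEigenspace, Module.End.mem_eigenspace_iff] at hy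
  have hd := decomp J hJ y
  set a := ReU y - J (ImU y) with ha
  set b := ReU y + J (ImU y) with hb
  have happ : (2 : ℝ) • ((-Complex.I) • y)
      = -Complex.I • vv J a + Complex.I • ww J b := by
    rw [← hy, ← baseChange_vv J hJ, ← baseChange_ww J hJ, ← map_add, ← hd,
      LinearMap.map_smul_of_tower]
  have key : -Complex.I • vv J a + Complex.I • ww J b
      = -Complex.I • vv J a + -Complex.I • ww J b := by
    rw [← happ, smul_comm, hd, smul_add]
  have h5 : Complex.I • ww J b = -Complex.I • ww J b := add_left_cancel key
  have hww0 : ww J b = 0 := by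
    have h6 : ((2 : ℂ) * Complex.I) • ww J b = 0 := by
      have h7 := sub_eq_zero.mpr h5
      rw [← sub_smul, show Complex.I - -Complex.I = 2 * Complex.I from by ring] at h7
      exact h7
    have h8 := congrArg (fun t => (((2 : ℂ) * Complex.I)⁻¹) • t) h6
    simpa [smul_smul, inv_mul_cancel₀
      (by simp [Complex.ext_iff] : (2 : ℂ) * Complex.I ≠ 0)] using h8
  refine ⟨(2⁻¹ : ℝ) • a, ?_⟩
  rw [vv_smul]
  rw [hww0, add_zero] at hd
  rw [← hd, smul_smul]
  norm_num

end EJ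

section Main
variable {U : Type} [AddCommGroup U] [Module ℝ U] [FiniteDimensional ℝ U]

lemma main_comp (x : ℂ ⊗[ℝ] U) :
    (1 : ℂ) ⊗ₜ[ℝ] (ReU x) + Complex.I ⊗ₜ[ℝ] (ReU ((-Complex.I) • x)) = x := by
  have h1 : (Complex.I ⊗ₜ[ℝ] (ReU ((-Complex.I) • x)) : ℂ ⊗[ℝ] U)
      = Complex.I • ((1 : ℂ) ⊗ₜ[ℝ] (ReU ((-Complex.I) • x))) := by
    rw [smul_tmul', smul_eq_mul, mul_one]
  rw [h1, one_tmul_ReU, one_tmul_ReU, conjTensor_smul]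
  simp only [map_neg, Complex.conj_I]
  match_scalars
  all_goals (simp [Complex.ext_iff]; try norm_num)

lemma totally_real {c d : ℂ ⊗[ℝ] U} (hc : ReU c = 0) (hd : ReU d = 0)
    (h : c = -Complex.I • d) : c = 0 := by
  have e1 : conjTensor U c = -c := conjTensor_eq_neg_of_ReU_eq_zero hc
  have e2 : conjTensor U d = -d := conjTensor_eq_neg_of_ReU_eq_zero hd
  have e3 : conjTensor U c = c := by
    rw [h, conjTensor_smul, e2]
    simp [smul_smul]
  have h4 : c = -c := e3.symm.trans e1
  have h5 : (2 : ℝ) • c = 0 := by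
    rw [two_smul]
    nth_rewrite 1 [h4]
    exact neg_add_cancel c
  have h2 := congrArg (fun t => (2⁻¹ : ℝ) • t) h5
  simpa [smul_smul] using h2
end Main

/-- Any linear co-CR structure `C` on a finite-dimensional real vector space `U`
(i.e. `C + σ(C) = U^ℂ`) is realized by a pair `(V, E)` where `E` is a complex vector
space, `V ⊆ E` is totally real (`V ∩ JV = 0`), and `π : E → U` is a surjection with
kernel `V` such that `π^ℂ(E^J) = C`. -/
theorem stmt4 (U : Type) [AddCommGroup U] [Module ℝ U] [FiniteDimensional ℝ U]
    (C : Submodule ℂ (ℂ ⊗[ℝ] U))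
    (hC : C.restrictScalars ℝ ⊔ (C.restrictScalars ℝ).map (conjTensor U) = ⊤) :
    ∃ (n : ℕ) (J : (Fin n → ℝ) →ₗ[ℝ] (Fin n → ℝ)) (V : Submodule ℝ (Fin n → ℝ))
      (π : (Fin n → ℝ) →ₗ[ℝ] U),
      J ∘ₗ J = -LinearMap.id ∧
      V ⊓ V.map J = ⊥ ∧
      Function.Surjective π ∧
      LinearMap.ker π = V ∧
      Submodule.map (LinearMap.baseChange ℂ π) (minusIEigenspace J) = C := by
  classical
  set C' : Submodule ℝ (ℂ ⊗[ℝ] U) := C.restrictScalars ℝ with hC'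
  haveI : FiniteDimensional ℝ (ℂ ⊗[ℝ] U) := Module.Finite.tensorProduct ℝ ℂ U
  haveI : FiniteDimensional ℝ ↥C' := inferInstance
  set n := Module.finrank ℝ ↥C' with hn
  set φ : (Fin n → ℝ) ≃ₗ[ℝ] ↥C' := (Module.finBasis ℝ ↥C').equivFun.symm with hφ
  -- the complex structure on C' given by multiplication with -i
  set f : ℂ ⊗[ℝ] U →ₗ[ℝ] ℂ ⊗[ℝ] U :=
    (LinearMap.lsmul ℂ (ℂ ⊗[ℝ] U) (-Complex.I)).restrictScalars ℝ with hf
  have hfmem : ∀ x ∈ C', f x ∈ C' := by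
    intro x hx
    exact C.smul_mem _ hx
  set J₀ : ↥C' →ₗ[ℝ] ↥C' := f.restrict hfmem with hJ₀def
  have hJ₀coe : ∀ c : ↥C', ((J₀ c : ℂ ⊗[ℝ] U)) = -Complex.I • (c : ℂ ⊗[ℝ] U) :=
    fun c => rfl
  have hJ₀ : ∀ c, J₀ (J₀ c) = -c := by
    intro c
    apply Subtype.ext
    rw [hJ₀coe, hJ₀coe, smul_smul]
    simp [Complex.I_mul_I]
  set π₀ : ↥C' →ₗ[ℝ] U := ReU ∘ₗ C'.subtype with hπ₀
  have hπ₀apply : ∀ c : ↥C', π₀ c = ReU (c : ℂ ⊗[ℝ] U) := fun c => rfl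
  -- transported to Fin n → ℝ
  refine ⟨n, φ.symm.toLinearMap ∘ₗ J₀ ∘ₗ φ.toLinearMap,
    LinearMap.ker (π₀ ∘ₗ φ.toLinearMap), π₀ ∘ₗ φ.toLinearMap, ?_, ?_, ?_, rfl, ?_⟩
  · -- J ∘ J = -id
    apply LinearMap.ext
    intro x
    show (φ.symm.toLinearMap ∘ₗ J₀ ∘ₗ φ.toLinearMap) ((φ.symm.toLinearMap ∘ₗ J₀ ∘ₗ φ.toLinearMap) x) = -x
    simp only [LinearMap.comp_apply, LinearEquiv.coe_coe, LinearEquiv.apply_symm_apply,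
      hJ₀, map_neg, LinearEquiv.symm_apply_apply]
  · -- V ⊓ J V = ⊥
    rw [eq_bot_iff]
    rintro x ⟨hx1, hx2⟩
    simp only [SetLike.mem_coe, LinearMap.mem_ker, LinearMap.comp_apply] at hx1
    simp only [SetLike.mem_coe, Submodule.mem_map] at hx2
    obtain ⟨y, hy, hyx⟩ := hx2
    simp only [LinearMap.mem_ker, LinearMap.comp_apply] at hy
    have hφx : ((φ x : ℂ ⊗[ℝ] U)) = -Complex.I • ((φ y : ℂ ⊗[ℝ] U)) := by
      rw [← hJ₀coe]
      congr 1
      rw [← hyx]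
      simp only [LinearMap.comp_apply, LinearEquiv.coe_coe, LinearEquiv.apply_symm_apply]
    have h0 : ((φ x : ℂ ⊗[ℝ] U)) = 0 :=
      totally_real (by rw [← hπ₀apply]; exact hx1) (by rw [← hπ₀apply]; exact hy) hφx
    have : φ x = 0 := Subtype.ext h0
    have := φ.injective (by simpa using this)
    simpa using this
  · -- surjectivity
    intro u
    have hmem : (1 : ℂ) ⊗ₜ[ℝ] u ∈ C' ⊔ C'.map (conjTensor U) := by
      rw [hC]; trivial
    obtain ⟨y, hy, z, hz, hyz⟩ := Submodule.mem_sup.mp hmem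
    obtain ⟨d, hd, rfl⟩ := hz
    refine ⟨φ.symm ⟨y + d, C'.add_mem hy hd⟩, ?_⟩
    simp only [LinearMap.comp_apply, LinearEquiv.coe_coe, LinearEquiv.apply_symm_apply]
    rw [hπ₀apply]
    show ReU (y + d) = u
    rw [map_add, ← ReU_conjTensor d, ← map_add, hyz, ReU_one_tmul]
  · -- image of eigenspace
    have hJe : ∀ e, (φ.symm.toLinearMap ∘ₗ J₀ ∘ₗ φ.toLinearMap) ((φ.symm.toLinearMap ∘ₗ J₀ ∘ₗ φ.toLinearMap) e) = -e := by
      intro e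
      simp only [LinearMap.comp_apply, LinearEquiv.coe_coe, LinearEquiv.apply_symm_apply, hJ₀,
        map_neg, LinearEquiv.symm_apply_apply]
    have himg : ∀ e : Fin n → ℝ,
        LinearMap.baseChange ℂ (π₀ ∘ₗ φ.toLinearMap) (vv (φ.symm.toLinearMap ∘ₗ J₀ ∘ₗ φ.toLinearMap) e)
          = ((φ e : ℂ ⊗[ℝ] U)) := by
      intro e
      rw [vv]
      simp only [map_add, LinearMap.baseChange_tmul, LinearMap.comp_apply, LinearEquiv.coe_coe,
        LinearEquiv.apply_symm_apply]
      rw [hπ₀apply, hπ₀apply, hJ₀coe]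
      exact main_comp _
    ext x
    constructor
    · rintro ⟨y, hy, rfl⟩
      obtain ⟨e, rfl⟩ := eig_sub_range _ hJe hy
      rw [himg]
      exact (φ e).2
    · intro hx
      refine ⟨vv _ (φ.symm ⟨x, hx⟩), vv_mem_eig _ hJe _, ?_⟩
      rw [himg, LinearEquiv.apply_symm_apply]
end

section
/- Let U be a real vector subspace of ℂ^k with U + iU = ℂ^k. Then there exists a ℂ-linear automorphism g of ℂ^k such that g(U) = {x ∈ ℂ^k : x_j ∈ ℝ for m < j ≤ k}, where m = dim_ℂ(U ∩ iU); in particular dim_ℝ U = k + m. That is, the pair corresponding to a CR vector space decomposes, uniquely up to the order of factors, as a product in which each factor is either (ℂ, ℂ) or (ℝ, ℂ). -/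
open Module

/-- Multiplication by `i` on `ℂ^k`, as a real-linear map. -/
noncomputable def mulI (k : ℕ) : (Fin k → ℂ) →ₗ[ℝ] (Fin k → ℂ) :=
  (Complex.I • (LinearMap.id : (Fin k → ℂ) →ₗ[ℂ] (Fin k → ℂ))).restrictScalars ℝ

set_option maxHeartbeats 2000000 in
set_option synthInstance.maxHeartbeats 1000000 in
theorem stmt7_aux (k : ℕ) (U : Submodule ℝ (Fin k → ℂ))
    (hU : U ⊔ U.map (mulI k) = ⊤) :
    ∃ m : ℕ,
      2 * m = finrank ℝ ↥(U ⊓ U.map (mulI k)) ∧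
      finrank ℝ ↥U = k + m ∧
      ∃ g : (Fin k → ℂ) ≃ₗ[ℂ] (Fin k → ℂ),
        (⇑g) '' (U : Set (Fin k → ℂ)) =
          {x : Fin k → ℂ | ∀ j : Fin k, m ≤ (j : ℕ) → (x j).im = 0} := by
  classical
  set J := mulI k with hJdef
  have hJ : ∀ x : Fin k → ℂ, J x = Complex.I • x := fun x => rfl
  set W := U ⊓ U.map J with hWdef
  have hWI : ∀ x ∈ W, Complex.I • x ∈ W := by
    intro x hx
    obtain ⟨hx1, u, hu, hux⟩ := hx
    refine ⟨?_, ⟨x, hx1, (hJ x).symm⟩⟩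
    have hxu : Complex.I • x = -u := by
      rw [← hux, hJ, smul_smul, Complex.I_mul_I, neg_one_smul]
    rw [hxu]
    exact U.neg_mem hu
  let Wc : Submodule ℂ (Fin k → ℂ) :=
    { carrier := W
      add_mem' := fun ha hb => W.add_mem ha hb
      zero_mem' := W.zero_mem
      smul_mem' := by
        intro c x hx
        have hdec : c • x = c.re • x + c.im • (Complex.I • x) := by
          ext j
          simp only [Pi.smul_apply, Pi.add_apply, Complex.real_smul, smul_eq_mul]
          conv_lhs => rw [← Complex.re_add_im c]
          ring
        rw [hdec]
        exact W.add_mem (W.smul_mem _ hx) (W.smul_mem _ (hWI x hx)) }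
  have hWcW : Wc.restrictScalars ℝ = W := rfl
  set m := finrank ℂ Wc with hm
  have hdimW : finrank ℝ W = 2 * m := by
    have eqWWc : W ≃ₗ[ℝ] Wc :=
      { toFun := fun x => ⟨x.1, x.2⟩
        invFun := fun x => ⟨x.1, x.2⟩
        map_add' := fun _ _ => rfl
        map_smul' := fun _ _ => rfl
        left_inv := fun _ => rfl
        right_inv := fun _ => rfl }
    have h1 : finrank ℝ W = finrank ℝ Wc := eqWWc.finrank_eq
    have h2 : finrank ℝ ℂ * finrank ℂ Wc = finrank ℝ Wc :=
      Module.finrank_mul_finrank ℝ ℂ Wc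
    rw [h1, ← h2, Complex.finrank_real_complex]
  have hinjJ : Function.Injective J := by
    intro x y h
    rw [hJ, hJ] at h
    have := congrArg (fun z => (-Complex.I) • z) h
    simpa [smul_smul, Complex.I_mul_I] using this
  have hdim2k : finrank ℝ (Fin k → ℂ) = 2 * k := by
    rw [← Module.finrank_mul_finrank ℝ ℂ (Fin k → ℂ), Complex.finrank_real_complex,
      Module.finrank_fintype_fun_eq_card, Fintype.card_fin]
  have hsum := Submodule.finrank_sup_add_finrank_inf_eq U (U.map J)
  rw [hU] at hsum
  have hmapJ : finrank ℝ (U.map J) = finrank ℝ U :=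
    (Submodule.equivMapOfInjective J hinjJ U).finrank_eq.symm
  rw [finrank_top, hdim2k, hmapJ, ← hWdef, hdimW] at hsum
  have hWU : W ≤ U := inf_le_left
  have hWleU : finrank ℝ W ≤ finrank ℝ U := Submodule.finrank_mono hWU
  have hdimU : finrank ℝ U = k + m := by omega
  have hmk : m ≤ k := by omega
  -- complement of W inside U
  obtain ⟨V', hV'⟩ := Submodule.exists_isCompl (W.comap U.subtype)
  set V : Submodule ℝ (Fin k → ℂ) := V'.map U.subtype with hVdef
  have hVU : V ≤ U := Submodule.map_subtype_le U V'
  have hWV : W ⊔ V = U := by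
    have h := congrArg (Submodule.map U.subtype) hV'.sup_eq_top
    rwa [Submodule.map_sup, Submodule.map_comap_subtype, Submodule.map_top,
      Submodule.range_subtype, inf_eq_right.mpr hWU] at h
  set_option synthInstance.maxHeartbeats 1000000 in
  have hdimV : finrank ℝ V = k - m := by
    have h1 : finrank ℝ (W.comap U.subtype) + finrank ℝ V' = finrank ℝ U := by
      have := Submodule.finrank_sup_add_finrank_inf_eq (W.comap U.subtype) V'
      rw [hV'.sup_eq_top, hV'.inf_eq_bot, finrank_top, finrank_bot] at this
      omega
    have h2 : finrank ℝ (W.comap U.subtype) = finrank ℝ W :=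
      (Submodule.comapSubtypeEquivOfLe hWU).finrank_eq
    have h3 : finrank ℝ V = finrank ℝ V' :=
      ((Submodule.equivMapOfInjective U.subtype (Submodule.injective_subtype U) V')).finrank_eq.symm
    omega
  -- bases
  let bW : Basis (Fin m) ℂ Wc := (Module.finBasis ℂ Wc).reindex (finCongr hm.symm)
  let bV : Basis (Fin (k - m)) ℝ V := (Module.finBasis ℝ V).reindex (finCongr (by rw [hdimV]))
  let e : Fin k → (Fin k → ℂ) := fun j =>
    if h : (j : ℕ) < m then (bW ⟨j, h⟩ : Fin k → ℂ)
    else ((bV ⟨(j : ℕ) - m, by have := j.2; omega⟩ : V) : Fin k → ℂ)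
  have heW : ∀ i : Fin m, e ⟨i, lt_of_lt_of_le i.2 hmk⟩ = (bW i : Fin k → ℂ) := by
    intro i
    simp only [e, dif_pos i.2]
  have heV : ∀ i : Fin (k - m), e ⟨m + i, by have := i.2; omega⟩ = (bV i : Fin k → ℂ) := by
    intro i
    have h : ¬ (m + (i : ℕ) < m) := by omega
    simp only [e, dif_neg h]
    congr 1
    ext
    simp
  -- span facts
  have hWspan : Wc = Submodule.span ℂ (Wc.subtype '' Set.range bW) := by
    have h := congrArg (Submodule.map Wc.subtype) bW.span_eq
    rw [Submodule.map_span, Submodule.map_top, Submodule.range_subtype] at h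
    exact h.symm
  have hVspan : V = Submodule.span ℝ (V.subtype '' Set.range bV) := by
    have h := congrArg (Submodule.map V.subtype) bV.span_eq
    rw [Submodule.map_span, Submodule.map_top, Submodule.range_subtype] at h
    exact h.symm
  set Sp := Submodule.span ℂ (Set.range e) with hSp
  have hWSp : ∀ x ∈ W, x ∈ Sp := by
    intro x hx
    have hx' : x ∈ Wc := hx
    rw [hWspan] at hx'
    refine Submodule.span_mono ?_ hx'
    rintro _ ⟨_, ⟨i, rfl⟩, rfl⟩
    exact ⟨⟨i, lt_of_lt_of_le i.2 hmk⟩, heW i⟩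
  have hVSp : ∀ x ∈ V, x ∈ Sp := by
    intro x hx
    rw [hVspan] at hx
    have : Submodule.span ℝ (V.subtype '' Set.range bV) ≤ Sp.restrictScalars ℝ := by
      rw [Submodule.span_le]
      rintro _ ⟨_, ⟨i, rfl⟩, rfl⟩
      exact Submodule.subset_span ⟨⟨m + i, by have := i.2; omega⟩, heV i⟩
    exact this hx
  have hUSp : ∀ x ∈ U, x ∈ Sp := by
    intro x hx
    rw [← hWV] at hx
    obtain ⟨w, hw, v, hv, rfl⟩ := Submodule.mem_sup.mp hx
    exact Sp.add_mem (hWSp w hw) (hVSp v hv)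
  have hspan : ⊤ ≤ Sp := by
    intro x _
    have hx : x ∈ U ⊔ U.map J := by rw [hU]; trivial
    obtain ⟨u, hu, w, hw, rfl⟩ := Submodule.mem_sup.mp hx
    obtain ⟨u', hu', rfl⟩ := hw
    rw [hJ]
    exact Sp.add_mem (hUSp u hu) (Sp.smul_mem _ (hUSp u' hu'))
  have heWmem : ∀ (j : Fin k) (h : (j : ℕ) < m), e j ∈ W := by
    intro j h
    simp only [e, dif_pos h]
    exact (bW ⟨j, h⟩).2
  have heVmem : ∀ (j : Fin k) (h : ¬ (j : ℕ) < m), e j ∈ V := by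
    intro j h
    simp only [e, dif_neg h]
    exact (bV _).2
  have hWcsmul : ∀ (c : ℂ), ∀ x ∈ W, c • x ∈ W := fun c x hx => Wc.smul_mem c hx
  have hcard : Fintype.card (Fin k) = finrank ℂ (Fin k → ℂ) := by
    rw [Module.finrank_fintype_fun_eq_card, Fintype.card_fin]
  let b : Basis (Fin k) ℂ (Fin k → ℂ) := basisOfTopLeSpanOfCardEqFinrank e hspan hcard
  have hb : ⇑b = e := coe_basisOfTopLeSpanOfCardEqFinrank e hspan hcard
  obtain ⟨g, hg⟩ : ∃ g : (Fin k → ℂ) ≃ₗ[ℂ] (Fin k → ℂ),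
      ∀ j, g (e j) = Pi.single j 1 := by
    refine ⟨b.equiv (Pi.basisFun ℂ (Fin k)) (Equiv.refl _), fun j => ?_⟩
    rw [← hb]
    show b.equiv (Pi.basisFun ℂ (Fin k)) (Equiv.refl _) (b j) = _
    rw [Basis.equiv_apply]
    simp
  refine ⟨m, hdimW.symm, hdimU, g, ?_⟩
  -- forward inclusion helpers
  have hgsm : ∀ (r : ℝ) (x : Fin k → ℂ), g (r • x) = r • g x := fun r x =>
    LinearMap.map_smul_of_tower g.toLinearMap r x
  have hgW : ∀ x ∈ W, ∀ j : Fin k, m ≤ (j : ℕ) → g x j = 0 := by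
    have key : ∀ x ∈ Submodule.span ℂ (Wc.subtype '' Set.range bW),
        ∀ j : Fin k, m ≤ (j : ℕ) → g x j = 0 := by
      intro x hx
      induction hx using Submodule.span_induction with
      | mem y hy =>
        obtain ⟨_, ⟨i, rfl⟩, rfl⟩ := hy
        intro j hj
        simp only [Submodule.subtype_apply]
        rw [← heW i, hg]
        have hne : j ≠ ⟨i, lt_of_lt_of_le i.2 hmk⟩ := by
          intro h
          have : (j : ℕ) = (i : ℕ) := by rw [h]
          have := i.2
          omega
        exact Pi.single_eq_of_ne hne 1
      | zero => intro j hj; simp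
      | add y z _ _ hy hz =>
        intro j hj
        rw [map_add, Pi.add_apply, hy j hj, hz j hj, add_zero]
      | smul c y _ hy =>
        intro j hj
        rw [map_smul, Pi.smul_apply, hy j hj, smul_zero]
    intro x hx
    exact key x (by rw [← hWspan]; exact hx)
  have hgV : ∀ x ∈ V, ∀ j : Fin k, (g x j).im = 0 := by
    have key : ∀ x ∈ Submodule.span ℝ (V.subtype '' Set.range bV),
        ∀ j : Fin k, (g x j).im = 0 := by
      intro x hx
      induction hx using Submodule.span_induction with
      | mem y hy =>
        obtain ⟨_, ⟨i, rfl⟩, rfl⟩ := hy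
        intro j
        simp only [Submodule.subtype_apply]
        rw [← heV i, hg]
        rcases eq_or_ne j ⟨m + i, by have := i.2; omega⟩ with h | h
        · rw [h, Pi.single_eq_same]; rfl
        · rw [Pi.single_eq_of_ne h]; rfl
      | zero => intro j; simp
      | add y z _ _ hy hz =>
        intro j
        rw [map_add, Pi.add_apply, Complex.add_im, hy j, hz j, add_zero]
      | smul c y _ hy =>
        intro j
        rw [hgsm, Pi.smul_apply, Complex.smul_im, hy j, smul_zero]
    intro x hx
    exact key x (by rw [← hVspan]; exact hx)
  apply Set.Subset.antisymm
  · rintro _ ⟨x, hx, rfl⟩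
    rw [← hWV] at hx
    obtain ⟨w, hw, v, hv, rfl⟩ := Submodule.mem_sup.mp hx
    intro j hj
    rw [map_add, Pi.add_apply, Complex.add_im, hgW w hw j hj, hgV v hv j]
    simp
  · intro y hy
    refine ⟨g.symm y, ?_, g.apply_symm_apply y⟩
    have hgsum : g (∑ j : Fin k, y j • e j) = y := by
      rw [map_sum]
      simp_rw [map_smul, hg]
      funext j'
      rw [Finset.sum_apply]
      simp [Pi.single_apply]
    have hsymm : g.symm y = ∑ j : Fin k, y j • e j := by
      apply g.injective
      rw [g.apply_symm_apply, hgsum]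
    rw [hsymm]
    apply Submodule.sum_mem
    intro j _
    by_cases hjm : (j : ℕ) < m
    · exact hWU (hWcsmul (y j) _ (heWmem j hjm))
    · have him : (y j).im = 0 := hy j (by omega)
      have hre : y j = ((y j).re : ℂ) := by
        rw [← Complex.re_add_im (y j), him]
        simp
      have hrs : y j • e j = (y j).re • e j := by
        rw [hre]
        funext j'
        simp [Complex.real_smul]
      rw [hrs]
      exact U.smul_mem _ (hVU (heVmem j hjm))

/-- If `U ⊆ ℂ^k` is a real subspace with `U + iU = ℂ^k` (a CR vector space), then, with
`m = dim_ℂ (U ∩ iU)`, one has `dim_ℝ U = k + m` and some complex-linear automorphism of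
`ℂ^k` carries `U` onto `ℂ^m × ℝ^{k-m}` — i.e. the pair decomposes into factors
`(ℂ, ℂ)` and `(ℝ, ℂ)`. -/
theorem stmt7 (k : ℕ) (U : Submodule ℝ (Fin k → ℂ))
    (hU : U ⊔ U.map (mulI k) = ⊤) :
    ∃ m : ℕ,
      2 * m = finrank ℝ ↥(U ⊓ U.map (mulI k)) ∧
      finrank ℝ ↥U = k + m ∧
      ∃ g : (Fin k → ℂ) ≃ₗ[ℂ] (Fin k → ℂ),
        (⇑g) '' (U : Set (Fin k → ℂ)) =
          {x : Fin k → ℂ | ∀ j : Fin k, m ≤ (j : ℕ) → (x j).im = 0} :=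
  stmt7_aux k U hU
end

section
/- Let k ≥ 1 and let V_k ⊆ ℍ^{2k+1} be the real vector subspace of all vectors of the form (z₁, conj(z₁) + z₂·j, z₃ − conj(z₂)·j, conj(z₃) + z₄·j, …, conj(z_{2k−1}) + z_{2k}·j, −conj(z_{2k})·j), where z₁, …, z_{2k} are complex numbers (i.e., the entry in position 2m is conj(z_{2m−1}) + z_{2m}·j, the entry in position 2m+1 is z_{2m+1} − conj(z_{2m})·j, with z_{2k+1} = 0). Then for every unit imaginary quaternion p, V_k ∩ p•V_k = 0; that is, the projection ℍ^{2k+1} → ℍ^{2k+1}/V_k defines a co-CR quaternionic vector space. -/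
open Quaternion

/-- The quaternion unit `j`. -/
noncomputable def jq : Quaternion ℝ := ⟨0, 0, 1, 0⟩

/-- The contribution of the complex coordinate `z_s` to a vector of `V_k ⊆ ℍ^{2k+1}`
(`0`-based index `s`; `1`-based odd coordinates `z_{2m-1}` contribute
`z·ε_{2m-1} + conj z·ε_{2m}`, even coordinates `z_{2m}` contribute
`z·j·ε_{2m} - conj z·j·ε_{2m+1}`). -/
noncomputable def vContrib (k : ℕ) (s : Fin (2 * k)) (z : ℂ) :
    Fin (2 * k + 1) → Quaternion ℝ :=
  if (s : ℕ) % 2 = 0 then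
    Pi.single s.castSucc (z : ℍ[ℝ]) + Pi.single s.succ (((starRingEnd ℂ) z : ℂ) : ℍ[ℝ])
  else
    Pi.single s.castSucc ((z : ℍ[ℝ]) * jq) +
      Pi.single s.succ (-((((starRingEnd ℂ) z : ℂ) : ℍ[ℝ]) * jq))

/-- The model subspace `V_k ⊆ ℍ^{2k+1}`: all vectors
`(z₁, conj z₁ + z₂·j, z₃ − conj z₂·j, …, conj z_{2k−1} + z_{2k}·j, −conj z_{2k}·j)`
with `z₁, …, z_{2k}` complex. -/
noncomputable def VkSet (k : ℕ) : Set (Fin (2 * k + 1) → Quaternion ℝ) :=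
  {y | ∃ z : Fin (2 * k) → ℂ, y = ∑ s, vContrib k s (z s)}

/-! ### Auxiliary material -/

namespace Stmt11Aux

/-- First complex component of a quaternion (`1, i` part). -/
noncomputable def P1 (q : ℍ[ℝ]) : ℂ := ⟨q.re, q.imI⟩
/-- Second complex component of a quaternion (`j, k` part). -/
noncomputable def P2 (q : ℍ[ℝ]) : ℂ := ⟨q.imJ, q.imK⟩

@[simp] lemma P1_mul (q r : ℍ[ℝ]) :
    P1 (q*r) = P1 q * P1 r - P2 q * (starRingEnd ℂ) (P2 r) := by
  apply Complex.ext <;>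
    simp [P1, P2, Quaternion.re_mul, Quaternion.imI_mul, Complex.mul_re, Complex.mul_im] <;> ring
@[simp] lemma P2_mul (q r : ℍ[ℝ]) :
    P2 (q*r) = P1 q * P2 r + P2 q * (starRingEnd ℂ) (P1 r) := by
  apply Complex.ext <;>
    simp [P1, P2, Quaternion.imJ_mul, Quaternion.imK_mul, Complex.mul_re, Complex.mul_im] <;> ring
@[simp] lemma P1_add (q r : ℍ[ℝ]) : P1 (q+r) = P1 q + P1 r := by apply Complex.ext <;> simp [P1]
@[simp] lemma P2_add (q r : ℍ[ℝ]) : P2 (q+r) = P2 q + P2 r := by apply Complex.ext <;> simp [P2]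
@[simp] lemma P1_sub (q r : ℍ[ℝ]) : P1 (q-r) = P1 q - P1 r := by apply Complex.ext <;> simp [P1]
@[simp] lemma P2_sub (q r : ℍ[ℝ]) : P2 (q-r) = P2 q - P2 r := by apply Complex.ext <;> simp [P2]
@[simp] lemma P1_neg (q : ℍ[ℝ]) : P1 (-q) = - P1 q := by apply Complex.ext <;> simp [P1]
@[simp] lemma P2_neg (q : ℍ[ℝ]) : P2 (-q) = - P2 q := by apply Complex.ext <;> simp [P2]
@[simp] lemma P1_one : P1 1 = 1 := by apply Complex.ext <;> simp [P1]
@[simp] lemma P2_one : P2 1 = 0 := by apply Complex.ext <;> simp [P2]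
@[simp] lemma P1_zero : P1 0 = 0 := by apply Complex.ext <;> simp [P1]
@[simp] lemma P2_zero : P2 0 = 0 := by apply Complex.ext <;> simp [P2]
@[simp] lemma P1_coe (z : ℂ) : P1 (z : ℍ[ℝ]) = z := by apply Complex.ext <;> simp [P1]
@[simp] lemma P2_coe (z : ℂ) : P2 (z : ℍ[ℝ]) = 0 := by apply Complex.ext <;> simp [P2]
@[simp] lemma P1_jq : P1 jq = 0 := by apply Complex.ext <;> simp [P1, jq]
@[simp] lemma P2_jq : P2 jq = 1 := by apply Complex.ext <;> simp [P2, jq]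

lemma vContrib_eq (k : ℕ) (s : Fin (2*k)) (z : ℂ) : vContrib k s z =
    Pi.single s.castSucc (if (s:ℕ)%2=0 then (z:ℍ[ℝ]) else (z:ℍ[ℝ])*jq)
    + Pi.single s.succ (if (s:ℕ)%2=0 then (((starRingEnd ℂ) z : ℂ):ℍ[ℝ])
        else -((((starRingEnd ℂ) z:ℂ):ℍ[ℝ])*jq)) := by
  unfold vContrib; split_ifs <;> rfl

lemma vContrib_zero (k : ℕ) (s : Fin (2*k)) : vContrib k s 0 = 0 := by
  unfold vContrib; split_ifs <;> simp

lemma sum_castSucc_apply {N : ℕ} (g : Fin N → ℍ[ℝ]) (i : Fin (N+1)) :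
    (∑ s, Pi.single (Fin.castSucc s) (g s) : Fin (N+1) → ℍ[ℝ]) i
      = if h : (i:ℕ) < N then g ⟨i, h⟩ else 0 := by
  rw [Finset.sum_apply]
  split_ifs with h
  · rw [Finset.sum_eq_single (⟨(i:ℕ), h⟩ : Fin N)]
    · simp [Pi.single_apply, Fin.ext_iff]
    · intro s _ hs
      refine Pi.single_eq_of_ne (fun hc => hs ?_) _
      apply Fin.ext
      have := congrArg Fin.val hc
      simp at this ⊢; omega
    · simp
  · apply Finset.sum_eq_zero
    intro s _
    refine Pi.single_eq_of_ne (fun hc => ?_) _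
    have := congrArg Fin.val hc; simp at this; omega

lemma sum_succ_apply {N : ℕ} (g : Fin N → ℍ[ℝ]) (i : Fin (N+1)) :
    (∑ s, Pi.single (Fin.succ s) (g s) : Fin (N+1) → ℍ[ℝ]) i
      = if h : 0 < (i:ℕ) then g ⟨(i:ℕ)-1, by omega⟩ else 0 := by
  rw [Finset.sum_apply]
  split_ifs with h
  · rw [Finset.sum_eq_single (⟨(i:ℕ)-1, by omega⟩ : Fin N)]
    · simp [Pi.single_apply, Fin.ext_iff]; intro hc; omega
    · intro s _ hs
      refine Pi.single_eq_of_ne (fun hc => hs ?_) _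
      apply Fin.ext
      have := congrArg Fin.val hc
      simp at this ⊢; omega
    · simp
  · apply Finset.sum_eq_zero
    intro s _
    refine Pi.single_eq_of_ne (fun hc => ?_) _
    have := congrArg Fin.val hc; simp at this; omega

/-- `1`-based extension of the coordinate family by zero. -/
noncomputable def zz (k : ℕ) (z : Fin (2*k) → ℂ) (n : ℕ) : ℂ :=
  if h : 0 < n ∧ n ≤ 2*k then z ⟨n-1, by omega⟩ else 0

lemma sum_vContrib_apply (k : ℕ) (z : Fin (2*k) → ℂ) (n : ℕ) (hn : n < 2*k+1) :
    (∑ s, vContrib k s (z s)) ⟨n, hn⟩ =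
      if n % 2 = 0 then
        ((zz k z (n+1) : ℂ) : ℍ[ℝ]) - (((starRingEnd ℂ) (zz k z n) : ℂ) : ℍ[ℝ]) * jq
      else
        (((starRingEnd ℂ) (zz k z n) : ℂ) : ℍ[ℝ]) + ((zz k z (n+1) : ℂ) : ℍ[ℝ]) * jq := by
  have hzz1 : zz k z (n+1) = if h : n < 2*k then z ⟨n, h⟩ else 0 := by
    rw [zz]; split_ifs <;> first | rfl | omega
  have hzz2 : zz k z n = if h : 0 < n then z ⟨n-1, by omega⟩ else 0 := by
    rw [zz]; split_ifs <;> first | rfl | omega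
  simp only [vContrib_eq, Finset.sum_add_distrib, Pi.add_apply,
    sum_castSucc_apply, sum_succ_apply, hzz1, hzz2]
  split_ifs <;> first | omega | simp [sub_eq_add_neg] | rw [add_comm]

end Stmt11Aux

open Stmt11Aux in
/-- For `k ≥ 1` and every unit imaginary quaternion `p`, `V_k ∩ p•V_k = 0`; that is,
the projection `ℍ^{2k+1} → ℍ^{2k+1}/V_k` defines a co-CR quaternionic vector space. -/
theorem stmt11 (k : ℕ) (hk : 1 ≤ k) (p : Quaternion ℝ) (hp : p ^ 2 = -1) :
    VkSet k ∩ ((fun y => fun i => p * y i) '' VkSet k) = {0} := by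
  have hmem0 : (0 : Fin (2*k+1) → ℍ[ℝ]) ∈ VkSet k :=
    ⟨0, by simp [vContrib_zero]⟩
  apply Set.eq_singleton_iff_unique_mem.mpr
  refine ⟨⟨hmem0, ⟨0, hmem0, funext fun i => mul_zero p⟩⟩, ?_⟩
  rintro x ⟨⟨z, hz⟩, y', ⟨w, hw⟩, hpy⟩
  have hx : ∀ i, (∑ s, vContrib k s (z s)) i = p * (∑ s, vContrib k s (w s)) i := by
    intro i
    rw [← hz, ← hw, ← hpy]
  -- the component equations
  have hE1 : ∀ n, n ≤ 2*k →
      zz k z (n+1) = P1 p * zz k w (n+1) + P2 p * zz k w n := by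
    intro n hn
    have h := hx ⟨n, by omega⟩
    rw [sum_vContrib_apply, sum_vContrib_apply] at h
    rcases Nat.even_or_odd n with he | ho
    · rw [if_pos (Nat.even_iff.mp he), if_pos (Nat.even_iff.mp he)] at h
      have e1 := congrArg P1 h
      simp at e1
      linear_combination e1
    · have ho' : n % 2 = 1 := Nat.odd_iff.mp ho
      rw [if_neg (by omega : ¬ n % 2 = 0), if_neg (by omega : ¬ n % 2 = 0)] at h
      have e1 := congrArg P2 h
      simp at e1
      linear_combination e1
  have hE2 : ∀ n, n ≤ 2*k →
      (starRingEnd ℂ) (zz k z n)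
        = P1 p * (starRingEnd ℂ) (zz k w n) - P2 p * (starRingEnd ℂ) (zz k w (n+1)) := by
    intro n hn
    have h := hx ⟨n, by omega⟩
    rw [sum_vContrib_apply, sum_vContrib_apply] at h
    rcases Nat.even_or_odd n with he | ho
    · rw [if_pos (Nat.even_iff.mp he), if_pos (Nat.even_iff.mp he)] at h
      have e2 := congrArg P2 h
      simp at e2
      linear_combination -e2
    · have ho' : n % 2 = 1 := Nat.odd_iff.mp ho
      rw [if_neg (by omega : ¬ n % 2 = 0), if_neg (by omega : ¬ n % 2 = 0)] at h
      have e2 := congrArg P1 h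
      simp at e2
      linear_combination e2
  have hpp : p * p = -1 := by rw [← sq]; exact hp
  have ha : P1 p * P1 p - P2 p * (starRingEnd ℂ) (P2 p) = -1 := by
    have := congrArg P1 hpp; simpa using this
  have hb : P1 p * P2 p + P2 p * (starRingEnd ℂ) (P1 p) = 0 := by
    have := congrArg P2 hpp; simpa using this
  have hzz0 : zz k z 0 = 0 := by rw [zz, dif_neg (by omega)]
  have hww0 : zz k w 0 = 0 := by rw [zz, dif_neg (by omega)]
  -- main claim : all the w-coordinates vanish
  have hwzero : ∀ n, zz k w n = 0 := by
    by_cases hB : P2 p = 0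
    · -- purely complex case : `a² = -1`
      have ha2 : P1 p * P1 p = -1 := by rw [hB] at ha; simpa using ha
      have hA0 : P1 p ≠ 0 := by
        intro h; rw [h] at ha2; norm_num at ha2
      have haI : (starRingEnd ℂ) (P1 p) = - P1 p := by
        have h0 : (P1 p - Complex.I) * (P1 p + Complex.I) = 0 := by
          linear_combination ha2 - Complex.I_sq
        rcases mul_eq_zero.mp h0 with h | h
        · rw [show P1 p = Complex.I by linear_combination h]; simp
        · rw [show P1 p = -Complex.I by linear_combination h]; simp
      intro n
      rcases Nat.eq_zero_or_pos n with rfl | hn0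
      · exact hww0
      by_cases hn : n ≤ 2*k
      · have e1 := hE1 (n-1) (by omega)
        rw [Nat.sub_add_cancel hn0] at e1
        have e2 := congrArg (starRingEnd ℂ) (hE2 n hn)
        simp only [map_sub, map_mul, Complex.conj_conj, haI, hB, map_zero] at e1 e2
        have h2a : (2 * P1 p) * zz k w n = 0 := by linear_combination e2 - e1
        rcases mul_eq_zero.mp h2a with h | h
        · exact absurd h (mul_ne_zero two_ne_zero hA0)
        · exact h
      · rw [zz, dif_neg (by omega)]
    · -- `a + conj a = 0` and forward recurrence
      have haa : (starRingEnd ℂ) (P1 p) = - P1 p := by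
        have h0 : P2 p * (P1 p + (starRingEnd ℂ) (P1 p)) = 0 := by linear_combination hb
        rcases mul_eq_zero.mp h0 with h | h
        · exact absurd h hB
        · linear_combination h
      have hw1 : zz k w 1 = 0 := by
        have e2 := hE2 0 (by omega)
        rw [hzz0, hww0] at e2
        simp only [map_zero, mul_zero, zero_sub] at e2
        rcases mul_eq_zero.mp (neg_eq_zero.mp e2.symm) with h | h
        · exact absurd h hB
        · simpa using congrArg (starRingEnd ℂ) h
      have hrec : ∀ n, 1 ≤ n → n ≤ 2*k →
          (starRingEnd ℂ) (P2 p) * zz k w (n+1)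
            = -(2 * P1 p) * zz k w n - P2 p * zz k w (n-1) := by
        intro n h1 h2
        have e1 := hE1 (n-1) (by omega)
        rw [Nat.sub_add_cancel h1] at e1
        have e2 := congrArg (starRingEnd ℂ) (hE2 n h2)
        simp only [map_sub, map_mul, Complex.conj_conj, haa] at e2
        linear_combination e2 - e1
      have hstep : ∀ n, zz k w n = 0 ∧ zz k w (n+1) = 0 := by
        intro n
        induction n with
        | zero => exact ⟨hww0, hw1⟩
        | succ m ih =>
          refine ⟨ih.2, ?_⟩
          by_cases hm : m + 1 ≤ 2*k
          · have h := hrec (m+1) (by omega) hm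
            rw [ih.2, show m+1-1 = m from rfl, ih.1] at h
            simp only [mul_zero, sub_zero, zero_sub, neg_zero] at h
            rcases mul_eq_zero.mp h with h' | h'
            · exact absurd h' (star_ne_zero.mpr hB)
            · exact h'
          · rw [zz, dif_neg (by omega)]
      exact fun n => (hstep n).1
  -- hence all the z-coordinates vanish
  have hzzero : ∀ s : Fin (2*k), z s = 0 := by
    intro s
    have e1 := hE1 (s : ℕ) (by omega)
    rw [hwzero, hwzero] at e1
    simp only [mul_zero, add_zero] at e1
    have : zz k z ((s:ℕ)+1) = z s := by
      rw [zz, dif_pos ⟨by omega, by omega⟩]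
      exact congrArg z (Fin.ext (by simp))
    rw [this] at e1
    exact e1
  rw [hz]
  exact Finset.sum_eq_zero fun s _ => by rw [hzzero s]; exact vContrib_zero k s
end

section
/- Let k ≥ 1 and let V_k ⊆ ℍ^{2k+1} be the real vector subspace of all vectors of the form (z₁, conj(z₁) + z₂·j, z₃ − conj(z₂)·j, …, conj(z_{2k−1}) + z_{2k}·j, −conj(z_{2k})·j), where z₁, …, z_{2k} are complex numbers. Then for every unit imaginary quaternion p, V_k^⊥ + p•(V_k^⊥) = ℍ^{2k+1}, where V_k^⊥ = {y ∈ ℍ^{2k+1} : Re(Σ x_i·conj(y_i)) = 0 for all x ∈ V_k}; that is, the dual of the pair (V_k, ℍ^{2k+1}) is given by a CR quaternionic vector space. -/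
open Quaternion

/-- The orthogonal complement `V_k^⊥ ⊆ ℍ^{2k+1}` with respect to the real inner product
`(x, y) ↦ Re (Σ_i x_i · conj (y_i))`. -/
noncomputable def VkPerp (k : ℕ) : Set (Fin (2 * k + 1) → Quaternion ℝ) :=
  {y | ∀ x ∈ VkSet k, ∑ i, (x i * star (y i)).re = 0}

/-!
Left multiplication by a unit imaginary quaternion `p` is an isometry of `ℍ^{2k+1}`, so
`(V_k^⊥ + p•V_k^⊥)^⊥ = V_k ∩ p•V_k` and it suffices to show `V_k ∩ p•V_k = 0`. Write
`p = c + d j` and each coordinate as `a + b j` with `a, b, c, d ∈ ℂ`. If `y` and `p y` both lie in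
`V_k`, then `b₁ = 0` for both; comparing the relation between consecutive coordinates of `y` with
that of `p y` forces the remaining part of the first coordinate to vanish as well as the part of the
next coordinate tied to it (using `d ≠ 0`, or `c = ±i` when `d = 0`). Propagating this along the
coordinates and using `a_{2k+1} = 0` at the end gives `y = 0`.
-/

open ComplexConjugate

namespace Quaternion

def complexPart : ℍ[ℝ] →ₗ[ℝ] ℂ where
  toFun q := ⟨q.re, q.imI⟩
  map_add' _ _ := by apply Complex.ext <;> simp
  map_smul' _ _ := by apply Complex.ext <;> simp

def jPart : ℍ[ℝ] →ₗ[ℝ] ℂ where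
  toFun q := ⟨q.imJ, q.imK⟩
  map_add' _ _ := by apply Complex.ext <;> simp
  map_smul' _ _ := by apply Complex.ext <;> simp

@[simp] lemma complexPart_re (q : ℍ[ℝ]) : (complexPart q).re = q.re := by simp [complexPart]
@[simp] lemma complexPart_im (q : ℍ[ℝ]) : (complexPart q).im = q.imI := by simp [complexPart]
@[simp] lemma jPart_re (q : ℍ[ℝ]) : (jPart q).re = q.imJ := by simp [jPart]
@[simp] lemma jPart_im (q : ℍ[ℝ]) : (jPart q).im = q.imK := by simp [jPart]

lemma eq_zero_of_complexPart_eq_zero_of_jPart_eq_zero {q : ℍ[ℝ]} (ha : complexPart q = 0)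
    (hb : jPart q = 0) : q = 0 := by
  ext
  · simpa using congrArg Complex.re ha
  · simpa using congrArg Complex.im ha
  · simpa using congrArg Complex.re hb
  · simpa using congrArg Complex.im hb

lemma complexPart_mul (p q : ℍ[ℝ]) :
    complexPart (p * q) = complexPart p * complexPart q - jPart p * conj (jPart q) := by
  apply Complex.ext <;> simp [re_mul, imI_mul] <;> ring

lemma jPart_mul (p q : ℍ[ℝ]) :
    jPart (p * q) = complexPart p * jPart q + jPart p * conj (complexPart q) := by
  apply Complex.ext <;> simp [imJ_mul, imK_mul] <;> ring

@[simp] lemma complexPart_coe (z : ℂ) : complexPart z = z := by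
  apply Complex.ext <;> simp
@[simp] lemma jPart_coe (z : ℂ) : jPart z = 0 := by
  apply Complex.ext <;> simp

lemma norm_eq_one_of_sq_eq_neg_one {p : ℍ[ℝ]} (hp : p ^ 2 = -1) : ‖p‖ = 1 := by
  have h : ‖p‖ ^ 2 = 1 := by rw [← norm_pow, hp, norm_neg, norm_one]
  exact (pow_eq_one_iff_of_nonneg (norm_nonneg p) two_ne_zero).mp h

lemma normSq_eq_one_of_sq_eq_neg_one {p : ℍ[ℝ]} (hp : p ^ 2 = -1) : normSq p = 1 := by
  rw [normSq_eq_norm_mul_self, norm_eq_one_of_sq_eq_neg_one hp, one_mul]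

lemma re_eq_zero_of_sq_eq_neg_one {p : ℍ[ℝ]} (hp : p ^ 2 = -1) : p.re = 0 := by
  rw [← sq_eq_neg_normSq, hp, normSq_eq_one_of_sq_eq_neg_one hp, coe_one]

lemma mem_unitary_of_sq_eq_neg_one {p : ℍ[ℝ]} (hp : p ^ 2 = -1) : p ∈ unitary ℍ[ℝ] := by
  rw [Unitary.mem_iff, star_mul_self, self_mul_star, normSq_eq_one_of_sq_eq_neg_one hp]
  exact ⟨coe_one, coe_one⟩

end Quaternion

open Quaternion

@[simp] lemma complexPart_coe_mul_jq (z : ℂ) : complexPart (z * jq) = 0 := by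
  apply Complex.ext <;> simp [re_mul, imI_mul] <;> simp [jq]

@[simp] lemma jPart_coe_mul_jq (z : ℂ) : jPart (z * jq) = z := by
  apply Complex.ext <;> simp [imJ_mul, imK_mul] <;> simp [jq]

/-- Writing each coordinate as `a + b j` with `a, b ∈ ℂ`, the vectors of `V_k` satisfy `b₁ = 0`,
`a_{2k+1} = 0` and these relations between consecutive coordinates. -/
def VkRel (s : ℕ) (q q' : ℍ[ℝ]) : Prop :=
  if s % 2 = 0 then complexPart q' = conj (complexPart q) else jPart q' = -conj (jPart q)

lemma VkRel.add {s : ℕ} {q₁ q₁' q₂ q₂' : ℍ[ℝ]} (h₁ : VkRel s q₁ q₁') (h₂ : VkRel s q₂ q₂') :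
    VkRel s (q₁ + q₂) (q₁' + q₂') := by
  unfold VkRel at *
  split_ifs at * <;> simp [*, add_comm]

lemma VkRel.smul {s : ℕ} {q q' : ℍ[ℝ]} (r : ℝ) (h : VkRel s q q') :
    VkRel s (r • q) (r • q') := by
  unfold VkRel at *
  split_ifs at * <;> simp [*, Complex.real_smul]

def Vk (k : ℕ) : Submodule ℝ (Fin (2 * k + 1) → ℍ[ℝ]) where
  carrier := {x | jPart (x 0) = 0 ∧ complexPart (x (Fin.last _)) = 0 ∧
    ∀ s : Fin (2 * k), VkRel s (x s.castSucc) (x s.succ)}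
  zero_mem' := ⟨map_zero _, map_zero _, fun s => by simp [VkRel]⟩
  add_mem' := fun ⟨hx₀, hxl, hx⟩ ⟨hy₀, hyl, hy⟩ =>
    ⟨by simp [hx₀, hy₀], by simp [hxl, hyl], fun s => (hx s).add (hy s)⟩
  smul_mem' := fun r _ ⟨hx₀, hxl, hx⟩ =>
    ⟨by simp [hx₀], by simp [hxl], fun s => (hx s).smul r⟩

lemma vContrib_mem_Vk (k : ℕ) (s : Fin (2 * k)) (z : ℂ) : vContrib k s z ∈ Vk k := by
  refine ⟨?_, ?_, fun t => ?_⟩ <;> unfold vContrib <;> try unfold VkRel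
  all_goals
    split_ifs <;> simp [Pi.single_apply, Fin.ext_iff] <;> split_ifs <;> first | omega | simp

lemma VkSet_subset_Vk (k : ℕ) : VkSet k ⊆ Vk k := by
  rintro _ ⟨z, rfl⟩
  exact Submodule.sum_mem _ fun s _ => vContrib_mem_Vk k s (z s)

lemma eq_zero_of_mul_eq_zero_of_mul_eq_mul {M₀ : Type*} [MulZeroClass M₀] [NoZeroDivisors M₀]
    {c d a w : M₀} (hcd : c ≠ 0 ∨ d ≠ 0) (h₁ : d * a = 0) (h₂ : c * a = d * w) : a = 0 := by
  rcases eq_or_ne d 0 with rfl | hd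
  · simpa [hcd.resolve_right (not_not.2 rfl)] using h₂
  · exact (mul_eq_zero.1 h₁).resolve_left hd

/-- The part of the `s`-th coordinate that `VkRel` ties to the previous coordinate. -/
def prevPart (s : ℕ) : ℍ[ℝ] →ₗ[ℝ] ℂ := if s % 2 = 0 then jPart else complexPart

lemma VkRel.eq_zero_of_prevPart_eq_zero {p : ℍ[ℝ]} (hre : p.re = 0) (hp : p ≠ 0) {s : ℕ}
    {q q' : ℍ[ℝ]} (h : VkRel s q q') (hpq : VkRel s (p * q) (p * q'))
    (h₀ : prevPart s q = 0) (hp₀ : prevPart s (p * q) = 0) :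
    q = 0 ∧ prevPart (s + 1) q' = 0 ∧ prevPart (s + 1) (p * q') = 0 := by
  have hc : conj (complexPart p) = -complexPart p := by
    apply Complex.ext <;> simp [hre]
  have hcd : complexPart p ≠ 0 ∨ jPart p ≠ 0 := by
    by_contra! h
    exact hp (eq_zero_of_complexPart_eq_zero_of_jPart_eq_zero h.1 h.2)
  have hcd₂ : 2 * complexPart p ≠ 0 ∨ jPart p ≠ 0 := by simpa using hcd
  unfold VkRel prevPart at *
  by_cases hs : s % 2 = 0
  · have hs' : ¬(s + 1) % 2 = 0 := by omega
    simp only [hs, hs', if_true, if_false] at *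
    have ha : complexPart q = 0 := by
      have h₁ : jPart p * conj (complexPart q) = 0 := by simpa [jPart_mul, h₀] using hp₀
      have h₂ : 2 * complexPart p * conj (complexPart q) = jPart p * conj (jPart q') := by
        rw [complexPart_mul, complexPart_mul, h, h₀] at hpq
        simp only [map_mul, hc, map_zero, mul_zero, sub_zero] at hpq
        linear_combination hpq
      simpa using eq_zero_of_mul_eq_zero_of_mul_eq_mul hcd₂ h₁ h₂
    refine ⟨eq_zero_of_complexPart_eq_zero_of_jPart_eq_zero ha h₀, by simp [h, ha], ?_⟩
    rw [hpq, complexPart_mul, ha, h₀]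
    simp
  · have hs' : (s + 1) % 2 = 0 := by omega
    simp only [hs, hs', if_true, if_false] at *
    have hb : jPart q = 0 := by
      have h₁ : jPart p * conj (jPart q) = 0 := by simpa [complexPart_mul, h₀] using hp₀
      have h₂ : 2 * complexPart p * conj (jPart q) = jPart p * conj (complexPart q') := by
        rw [jPart_mul, jPart_mul, h, h₀] at hpq
        simp only [map_mul, hc, map_zero, mul_zero, add_zero] at hpq
        linear_combination -hpq
      simpa using eq_zero_of_mul_eq_zero_of_mul_eq_mul hcd₂ h₁ h₂
    refine ⟨eq_zero_of_complexPart_eq_zero_of_jPart_eq_zero h₀ hb, by simp [h, hb], ?_⟩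
    rw [hpq, jPart_mul, hb, h₀]
    simp

lemma eq_zero_of_mem_Vk_of_mul_mem_Vk {p : ℍ[ℝ]} (hre : p.re = 0) (hp : p ≠ 0) {k : ℕ}
    {y : Fin (2 * k + 1) → ℍ[ℝ]} (hy : y ∈ Vk k) (hpy : (fun i => p * y i) ∈ Vk k) : y = 0 := by
  obtain ⟨hy₀, hyl, hy⟩ := hy
  obtain ⟨hpy₀, -, hpy⟩ := hpy
  have step (s : Fin (2 * k)) := VkRel.eq_zero_of_prevPart_eq_zero hre hp (hy s) (hpy s)
  have hprev (i : Fin (2 * k + 1)) : prevPart i (y i) = 0 ∧ prevPart i (p * y i) = 0 := by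
    induction i using Fin.induction with
    | zero => exact ⟨by simpa [prevPart] using hy₀, by simpa [prevPart] using hpy₀⟩
    | succ s ih => exact (step s ih.1 ih.2).2
  funext i
  induction i using Fin.lastCases with
  | last =>
    exact eq_zero_of_complexPart_eq_zero_of_jPart_eq_zero hyl
      (by simpa [prevPart] using (hprev (Fin.last _)).1)
  | cast s => exact (step s (hprev s.castSucc).1 (hprev s.castSucc).2).1

theorem Submodule.orthogonal_sup_orthogonal_eq_top {𝕜 E : Type*} [RCLike 𝕜]
    [NormedAddCommGroup E] [InnerProductSpace 𝕜 E] [FiniteDimensional 𝕜 E]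
    {K L : Submodule 𝕜 E} (h : K ⊓ L = ⊥) : Kᗮ ⊔ Lᗮ = ⊤ := by
  rw [← Submodule.orthogonal_eq_bot_iff, ← Submodule.inf_orthogonal,
    Submodule.orthogonal_orthogonal, Submodule.orthogonal_orthogonal, h]

abbrev VkLp (k : ℕ) : Submodule ℝ (PiLp 2 fun _ : Fin (2 * k + 1) => ℍ[ℝ]) :=
  (Vk k).comap (WithLp.linearEquiv 2 ℝ _).toLinearMap

lemma ofLp_mem_VkPerp {k : ℕ} {y : PiLp 2 fun _ : Fin (2 * k + 1) => ℍ[ℝ]}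
    (hy : y ∈ (VkLp k)ᗮ) : y.ofLp ∈ VkPerp k := by
  intro x hx
  have := Submodule.inner_right_of_mem_orthogonal (u := WithLp.toLp 2 x)
    (VkSet_subset_Vk k hx) hy
  simpa [PiLp.inner_apply, Quaternion.inner_def] using this

theorem stmt15_general (k : ℕ) (p : Quaternion ℝ) (hp : p ^ 2 = -1) :
    ∀ w : Fin (2 * k + 1) → Quaternion ℝ,
      ∃ u v, u ∈ VkPerp k ∧ v ∈ VkPerp k ∧ w = u + fun i => p * v i := by
  intro w
  set T := LinearIsometryEquiv.piLpCongrRight 2 fun _ : Fin (2 * k + 1) =>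
    Unitary.mulLeft ℝ ℍ[ℝ] ⟨p, mem_unitary_of_sq_eq_neg_one hp⟩
  have hp0 : p ≠ 0 := by rintro rfl; simp at hp
  have hinf : VkLp k ⊓ (VkLp k).map T.toLinearEquiv.toLinearMap = ⊥ := by
    rw [Submodule.eq_bot_iff]
    rintro _ ⟨hx, y, hy, rfl⟩
    have hy0 : y.ofLp = 0 :=
      eq_zero_of_mem_Vk_of_mul_mem_Vk (re_eq_zero_of_sq_eq_neg_one hp) hp0 hy hx
    rw [← WithLp.toLp_ofLp 2 y, hy0, WithLp.toLp_zero, map_zero]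
  have htop := Submodule.orthogonal_sup_orthogonal_eq_top hinf
  rw [← Submodule.map_orthogonal_equiv] at htop
  obtain ⟨u, hu, _, ⟨v, hv, rfl⟩, huv⟩ :=
    Submodule.mem_sup.1 (htop ▸ Submodule.mem_top : WithLp.toLp 2 w ∈ _)
  refine ⟨u.ofLp, v.ofLp, ofLp_mem_VkPerp hu, ofLp_mem_VkPerp hv, ?_⟩
  rw [← WithLp.ofLp_toLp 2 w, ← huv]
  rfl

/-- For `k ≥ 1` and every unit imaginary quaternion `p`,
`V_k^⊥ + p•(V_k^⊥) = ℍ^{2k+1}`; that is, the dual of the pair `(V_k, ℍ^{2k+1})` is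
given by a CR quaternionic vector space. -/
theorem stmt15 (k : ℕ) (hk : 1 ≤ k) (p : Quaternion ℝ) (hp : p ^ 2 = -1) :
    ∀ w : Fin (2 * k + 1) → Quaternion ℝ,
      ∃ u v, u ∈ VkPerp k ∧ v ∈ VkPerp k ∧ w = u + fun i => p * v i :=
  stmt15_general k p hp
end
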